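/- arXiv:1410.5620 — 2 statements merged into one kernel-verified Lean document; each statement's English description precedes it below -/
import Mathlib

section
/- Norm bound for the deflated preconditioned operator: with P_G = P/η + f dᵀ and J_G = J/η + f dᵀ as above, in any submultiplicative matrix norm, ‖P_G⁻¹ J_G - P⁻¹ J‖ ≤ |η/(1 + η dᵀ P⁻¹ f)| · ‖P⁻¹ f dᵀ‖ · ‖P⁻¹ J - I‖. -/
/-!
Since `J_G - P_G P⁻¹ J = f dᵀ (I - P⁻¹ J)`, the difference `P_G⁻¹ J_G - P⁻¹ J` equals
`P_G⁻¹ f dᵀ (I - P⁻¹ J)`. By Sherman–Morrison, `P_G⁻¹ f = η / (1 + η dᵀ P⁻¹ f) • P⁻¹ f`, so the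
difference is a scalar multiple of `P⁻¹ f dᵀ (P⁻¹ J - I)`, and submultiplicativity concludes.
-/

open Matrix

namespace Matrix

variable {m R : Type*} [Fintype m] [DecidableEq m]

theorem det_add_vecMulVec [CommRing R] {A : Matrix m m R} (hA : IsUnit A) (u v : m → R) :
    (A + vecMulVec u v).det = A.det * (1 + v ⬝ᵥ A⁻¹ *ᵥ u) := by
  rw [vecMulVec_eq Unit, det_add_replicateCol_mul_replicateRow ((isUnit_iff_isUnit_det A).mp hA),
    det_unique (n := Unit), Matrix.mul_assoc, ← replicateCol_mulVec]
  simp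

theorem isUnit_add_vecMulVec [CommRing R] {A : Matrix m m R} (hA : IsUnit A) (u v : m → R)
    (hs : IsUnit (1 + v ⬝ᵥ A⁻¹ *ᵥ u)) : IsUnit (A + vecMulVec u v) := by
  rw [isUnit_iff_isUnit_det, det_add_vecMulVec hA]
  exact ((isUnit_iff_isUnit_det A).mp hA).mul hs

theorem inv_add_vecMulVec_mulVec [Field R] {A : Matrix m m R} (hA : IsUnit A) (u v : m → R)
    (hs : 1 + v ⬝ᵥ A⁻¹ *ᵥ u ≠ 0) :
    (A + vecMulVec u v)⁻¹ *ᵥ u = (1 + v ⬝ᵥ A⁻¹ *ᵥ u)⁻¹ • A⁻¹ *ᵥ u := by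
  have hB := isUnit_add_vecMulVec hA u v hs.isUnit
  have hBA : (A + vecMulVec u v) *ᵥ (A⁻¹ *ᵥ u) = (1 + v ⬝ᵥ A⁻¹ *ᵥ u) • u := by
    rw [add_mulVec, mulVec_mulVec, mul_nonsing_inv _ ((isUnit_iff_isUnit_det A).mp hA), one_mulVec,
      vecMulVec_mulVec, add_smul, one_smul]
    simp
  rw [eq_inv_smul_iff₀ hs, ← mulVec_smul, ← hBA, mulVec_mulVec,
    nonsing_inv_mul _ ((isUnit_iff_isUnit_det _).mp hB), one_mulVec]

theorem inv_mul_smul_add_sub_inv_mul [CommRing R] {P E : Matrix m m R} (c : R)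
    (hA : IsUnit (c • P + E)) (hP : IsUnit P) (J : Matrix m m R) :
    (c • P + E)⁻¹ * (c • J + E) - P⁻¹ * J = (c • P + E)⁻¹ * E * (1 - P⁻¹ * J) := by
  have hB : c • J + E = (c • P + E) * (P⁻¹ * J) + E * (1 - P⁻¹ * J) := by
    rw [add_mul, smul_mul_assoc,
      mul_nonsing_inv_cancel_left _ _ ((isUnit_iff_isUnit_det P).mp hP)]
    noncomm_ring
  rw [hB, mul_add, nonsing_inv_mul_cancel_left _ _ ((isUnit_iff_isUnit_det _).mp hA),
    Matrix.mul_assoc]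
  abel

end Matrix

theorem deflated_preconditioner_norm_bound_general {n : ℕ}
    (P J : Matrix (Fin n) (Fin n) ℝ) (hP : IsUnit P)
    (η : ℝ) (hη : η ≠ 0) (f d : Fin n → ℝ)
    (hden : 1 + η * (d ⬝ᵥ (P⁻¹ *ᵥ f)) ≠ 0)
    (N : Matrix (Fin n) (Fin n) ℝ → ℝ)
    (hNsmul : ∀ (c : ℝ) (A : Matrix (Fin n) (Fin n) ℝ), N (c • A) = |c| * N A)
    (hNmul : ∀ A B : Matrix (Fin n) (Fin n) ℝ, N (A * B) ≤ N A * N B) :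
    N ((η⁻¹ • P + vecMulVec f d)⁻¹ * (η⁻¹ • J + vecMulVec f d) - P⁻¹ * J) ≤
      |η / (1 + η * (d ⬝ᵥ (P⁻¹ *ᵥ f)))| * N (P⁻¹ * vecMulVec f d) * N (P⁻¹ * J - 1) := by
  set s := 1 + η * (d ⬝ᵥ (P⁻¹ *ᵥ f))
  have hinv : (η⁻¹ • P)⁻¹ = η • P⁻¹ := by
    simpa [Units.smul_def] using
      inv_smul' P (Units.mk0 η⁻¹ (inv_ne_zero hη)) ((isUnit_iff_isUnit_det P).mp hP)
  have hPη : IsUnit (η⁻¹ • P) := hP.smul (Units.mk0 η⁻¹ (inv_ne_zero hη))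
  have hs : 1 + d ⬝ᵥ (η⁻¹ • P)⁻¹ *ᵥ f = s := by
    rw [hinv, smul_mulVec, dotProduct_smul, smul_eq_mul]
  have hPG := isUnit_add_vecMulVec hPη f d (hs ▸ hden.isUnit)
  have hdefl : (η⁻¹ • P + vecMulVec f d)⁻¹ * vecMulVec f d = (η / s) • (P⁻¹ * vecMulVec f d) := by
    rw [mul_vecMulVec, mul_vecMulVec, inv_add_vecMulVec_mulVec hPη f d (hs ▸ hden), hs, hinv,
      smul_mulVec, smul_smul, ← smul_vecMulVec, div_eq_inv_mul]
  calc N ((η⁻¹ • P + vecMulVec f d)⁻¹ * (η⁻¹ • J + vecMulVec f d) - P⁻¹ * J)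
      = N ((-(η / s)) • (P⁻¹ * vecMulVec f d * (P⁻¹ * J - 1))) := by
        rw [inv_mul_smul_add_sub_inv_mul η⁻¹ hPG hP J, hdefl, smul_mul_assoc,
          ← neg_sub (P⁻¹ * J), mul_neg, neg_smul, smul_neg]
    _ ≤ |η / s| * (N (P⁻¹ * vecMulVec f d) * N (P⁻¹ * J - 1)) := by
        rw [hNsmul, abs_neg]
        exact mul_le_mul_of_nonneg_left (hNmul _ _) (abs_nonneg _)
    _ = _ := (mul_assoc _ _ _).symm

theorem deflated_preconditioner_norm_bound {n : ℕ}
    (P J : Matrix (Fin n) (Fin n) ℝ) (hP : IsUnit P)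
    (η : ℝ) (hη : η ≠ 0) (f d : Fin n → ℝ)
    (hden : 1 + η * (d ⬝ᵥ (P⁻¹ *ᵥ f)) ≠ 0)
    (N : Matrix (Fin n) (Fin n) ℝ → ℝ)
    (hN0 : ∀ A, 0 ≤ N A)
    (hNsmul : ∀ (c : ℝ) (A : Matrix (Fin n) (Fin n) ℝ), N (c • A) = |c| * N A)
    (hNmul : ∀ A B : Matrix (Fin n) (Fin n) ℝ, N (A * B) ≤ N A * N B) :
    N ((η⁻¹ • P + vecMulVec f d)⁻¹ * (η⁻¹ • J + vecMulVec f d) - P⁻¹ * J) ≤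
      |η / (1 + η * (d ⬝ᵥ (P⁻¹ *ᵥ f)))| * N (P⁻¹ * vecMulVec f d) * N (P⁻¹ * J - 1) :=
  deflated_preconditioner_norm_bound_general P J hP η hη f d hden N hNsmul hNmul
end

section
/- For the Bratu–Gelfand problem u'' + λe^u = 0, u(0) = u(1) = 0, every solution has the one-parameter form u(x) = -2 ln( cosh((x - 1/2)θ/2) / cosh(θ/4) ) where θ satisfies θ = √(2λ) cosh(θ/4); consequently, for λ > 0 the number of solutions equals the number of positive roots θ of this transcendental equation, and the function u so defined indeed satisfies u'' + λ e^u = 0 with u(0) = u(1) = 0 whenever θ = √(2λ) cosh(θ/4). -/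
/-!
Write `s = (x - m) c`. The profile `u = -2 log (cosh s / K)` has `u' = -2c tanh s` and
`u'' = -2c² / cosh² s`, while `e^u = K² / cosh² s`; hence `u'' + (2c² / K²) e^u = 0` for every
`c`, `m` and `K ≠ 0`. With `c = θ/2`, `m = 1/2`, `K = cosh (θ/4)` the profile vanishes at
`x = 0, 1`, and squaring `θ = √(2λ) cosh (θ/4)` says precisely that `2c² / K² = λ`.
-/

open Real

theorem Real.hasDerivAt_tanh (x : ℝ) : HasDerivAt tanh (1 / cosh x ^ 2) x := by
  have h := (hasDerivAt_sinh x).div (hasDerivAt_cosh x) (cosh_pos x).ne'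
  rw [show sinh / cosh = tanh from funext fun y => (tanh_eq_sinh_div_cosh y).symm] at h
  exact h.congr_deriv (by rw [← cosh_sq_sub_sinh_sq x]; ring)

theorem Real.hasDerivAt_log_cosh (x : ℝ) : HasDerivAt (fun y => log (cosh y)) (tanh x) x := by
  rw [tanh_eq_sinh_div_cosh]
  exact (hasDerivAt_cosh x).log (cosh_pos x).ne'

noncomputable def bratuProfile (c m K x : ℝ) : ℝ := -2 * log (cosh ((x - m) * c) / K)

section bratuProfile

variable {c m K : ℝ}

theorem hasDerivAt_sub_mul (c m x : ℝ) : HasDerivAt (fun y => (y - m) * c) c x := by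
  simpa using ((hasDerivAt_id x).sub_const m).mul_const c

theorem hasDerivAt_bratuProfile (hK : K ≠ 0) (x : ℝ) :
    HasDerivAt (bratuProfile c m K) (-2 * c * tanh ((x - m) * c)) x := by
  have hsplit : bratuProfile c m K = fun y => -2 * log (cosh ((y - m) * c)) + 2 * log K := by
    funext y
    rw [bratuProfile, log_div (cosh_pos _).ne' hK]
    ring
  rw [hsplit]
  refine ((((hasDerivAt_log_cosh _).comp x (hasDerivAt_sub_mul c m x)).const_mul (-2)).add_const
    _).congr_deriv ?_
  ring

theorem deriv_bratuProfile (hK : K ≠ 0) :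
    deriv (bratuProfile c m K) = fun x => -2 * c * tanh ((x - m) * c) :=
  funext fun x => (hasDerivAt_bratuProfile hK x).deriv

theorem deriv_deriv_bratuProfile (hK : K ≠ 0) (x : ℝ) :
    deriv (deriv (bratuProfile c m K)) x = -2 * c ^ 2 / cosh ((x - m) * c) ^ 2 := by
  rw [deriv_bratuProfile hK]
  refine ((((hasDerivAt_tanh _).comp x (hasDerivAt_sub_mul c m x)).const_mul
    (-2 * c)).congr_deriv ?_).deriv
  ring

theorem exp_bratuProfile (hK : K ≠ 0) (x : ℝ) :
    exp (bratuProfile c m K x) = K ^ 2 / cosh ((x - m) * c) ^ 2 := by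
  have hpos : 0 < (cosh ((x - m) * c) / K) ^ 2 := by
    have := (cosh_pos ((x - m) * c)).ne'
    positivity
  rw [bratuProfile, show (-2 : ℝ) * log (cosh ((x - m) * c) / K)
      = -log ((cosh ((x - m) * c) / K) ^ 2) by rw [log_pow]; push_cast; ring,
    exp_neg, exp_log hpos, div_pow, inv_div]

theorem bratuProfile_ode (hK : K ≠ 0) (x : ℝ) :
    deriv (deriv (bratuProfile c m K)) x + 2 * c ^ 2 / K ^ 2 * exp (bratuProfile c m K x) = 0 := by
  rw [deriv_deriv_bratuProfile hK, exp_bratuProfile hK]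
  have := (cosh_pos ((x - m) * c)).ne'
  field_simp
  ring

theorem bratuProfile_eq_zero_of_cosh_eq {x : ℝ} (h : cosh ((x - m) * c) = K) :
    bratuProfile c m K x = 0 := by
  rw [bratuProfile, h, div_self (h ▸ cosh_pos _).ne', log_one, mul_zero]

end bratuProfile

theorem bratu_gelfand_explicit_solution_general
    (lam θ : ℝ) (hlam : 0 < lam)
    (htrans : θ = Real.sqrt (2 * lam) * Real.cosh (θ / 4))
    (u : ℝ → ℝ)
    (hu : ∀ x, u x = -2 * Real.log (Real.cosh ((x - 1/2) * θ / 2) / Real.cosh (θ / 4))) :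
    u 0 = 0 ∧ u 1 = 0 ∧
    ∀ x ∈ Set.Ioo (0 : ℝ) 1, deriv (deriv u) x + lam * Real.exp (u x) = 0 := by
  have hu_eq : u = bratuProfile (θ / 2) (1 / 2) (cosh (θ / 4)) := by
    funext x
    rw [hu, bratuProfile, mul_div_assoc]
  have hθ_sq : θ ^ 2 = 2 * lam * cosh (θ / 4) ^ 2 := by
    rw [congrArg (· ^ 2) htrans, mul_pow, sq_sqrt (by positivity)]
  subst hu_eq
  refine ⟨bratuProfile_eq_zero_of_cosh_eq ?_, bratuProfile_eq_zero_of_cosh_eq ?_, fun x _ => ?_⟩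
  · rw [show (0 - 1 / 2) * (θ / 2) = -(θ / 4) by ring, cosh_neg]
  · ring_nf
  · have hK := (cosh_pos (θ / 4)).ne'
    convert bratuProfile_ode hK x using 3
    field_simp
    linarith

theorem bratu_gelfand_explicit_solution
    (lam θ : ℝ) (hlam : 0 < lam) (hθ : 0 < θ)
    (htrans : θ = Real.sqrt (2 * lam) * Real.cosh (θ / 4))
    (u : ℝ → ℝ)
    (hu : ∀ x, u x = -2 * Real.log (Real.cosh ((x - 1/2) * θ / 2) / Real.cosh (θ / 4))) :
    u 0 = 0 ∧ u 1 = 0 ∧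
    ∀ x ∈ Set.Ioo (0 : ℝ) 1, deriv (deriv u) x + lam * Real.exp (u x) = 0 :=
  bratu_gelfand_explicit_solution_general lam θ hlam htrans u hu
end
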